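/- arXiv:2008.12059 — 5 statements merged into one kernel-verified Lean document; each statement's English description precedes it below -/
import Mathlib

section
/- Let p : ℝ → ℝ be a polynomial function of degree at most 2, let h > 0 and x ∈ ℝ, and for each integer k let f_k = (1/h)∫_{x+(k−1/2)h}^{x+(k+1/2)h} p(t) dt be the cell average of p over the cell centered at x + k h. Then Van Leer's κ-reconstruction with κ = 1/3 from the left recovers the point value of p at the face x + h/2 exactly: (1/3)·(f_0 + f_1)/2 + (2/3)·(f_0 + (f_1 − f_{−1})/4) = p(x + h/2). -/
open intervalIntegral

lemma quad_integral (a b c u v : ℝ) :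
    (∫ t in u..v, (a * t ^ 2 + b * t + c))
      = a * (v ^ 3 - u ^ 3) / 3 + b * (v ^ 2 - u ^ 2) / 2 + c * (v - u) := by
  have : (∫ t in u..v, (a * t ^ 2 + b * t + c))
      = (∫ t in u..v, a * t ^ 2) + (∫ t in u..v, b * t) + (∫ t in u..v, (c : ℝ)) := by
    rw [intervalIntegral.integral_add, intervalIntegral.integral_add]
    · exact (intervalIntegrable_pow 2).const_mul a
    · exact (intervalIntegrable_id).const_mul b
    · exact ((intervalIntegrable_pow 2).const_mul a).add ((intervalIntegrable_id).const_mul b)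
    · exact intervalIntegrable_const
  rw [this, intervalIntegral.integral_const_mul, intervalIntegral.integral_const_mul,
    integral_pow, integral_id, intervalIntegral.integral_const]
  simp only [smul_eq_mul]
  ring

/-- For a polynomial function `p` of degree at most 2, Van Leer's κ-reconstruction with
`κ = 1/3` from the left, applied to the cell averages `f k` of `p` over cells of width `h`
centered at `x + k h`, recovers the point value of `p` at the face `x + h/2` exactly. -/
theorem vanLeer_kappa_third_left_exact_quadratic
    (p : ℝ → ℝ) (a b c : ℝ) (hp : ∀ t : ℝ, p t = a * t ^ 2 + b * t + c)
    (h : ℝ) (hh : 0 < h) (x : ℝ)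
    (f : ℤ → ℝ)
    (hf : ∀ k : ℤ, f k =
      (1 / h) * ∫ t in (x + ((k : ℝ) - 1 / 2) * h)..(x + ((k : ℝ) + 1 / 2) * h), p t) :
    (1 / 3) * ((f 0 + f 1) / 2) + (2 / 3) * (f 0 + (f 1 - f (-1)) / 4)
      = p (x + h / 2) := by
  simp only [hf, hp]
  push_cast
  rw [quad_integral, quad_integral, quad_integral]
  field_simp
  ring
end

section
/- Let g : ℝ → ℝ be three times continuously differentiable on a neighborhood of x ∈ ℝ. Then as h → 0⁺, the κ = 1/3 left reconstructed face value satisfies L(g,x,h) = g(x) + (h/2)g′(x) + (h²/12)g″(x) + (h³/12)g‴(x) + o(h³). -/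
open Filter Topology Asymptotics

/-- Van Leer's `κ = 1/3` left reconstructed face value at the face `x + h/2`,
from point samples of `g` on a uniform grid of spacing `h`. -/
noncomputable def Lrec (g : ℝ → ℝ) (x h : ℝ) : ℝ :=
  (1 / 6) * (g x + g (x + h)) + (2 / 3) * (g x + (g (x + h) - g (x - h)) / 4)

/-- Key step: if `f 0 = 0` and `f' = o(h^n)` near `0`, then `f = o(h^(n+1))`. -/
lemma isLittleO_succ_of_deriv {f f' : ℝ → ℝ} {n : ℕ} {δ : ℝ} (hδ : 0 < δ)
    (hd : ∀ t ∈ Metric.ball (0 : ℝ) δ, HasDerivAt f (f' t) t)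
    (h0 : f 0 = 0)
    (ho : f' =o[𝓝 (0 : ℝ)] fun h : ℝ => h ^ n) :
    f =o[𝓝 (0 : ℝ)] fun h : ℝ => h ^ (n + 1) := by
  rw [Asymptotics.isLittleO_iff] at ho ⊢
  intro ε hε
  have hb := ho hε
  rw [Metric.eventually_nhds_iff] at hb ⊢
  obtain ⟨δ', hδ', hball⟩ := hb
  refine ⟨min δ δ', lt_min hδ hδ', fun {h} hh => ?_⟩
  simp only [dist_zero_right, Real.norm_eq_abs] at hh ⊢
  have hhδ : |h| < δ := lt_of_lt_of_le hh (min_le_left _ _)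
  have hhδ' : |h| < δ' := lt_of_lt_of_le hh (min_le_right _ _)
  have habs : ∀ t ∈ segment ℝ (0 : ℝ) h, |t| ≤ |h| := by
    intro t ht
    rw [segment_eq_uIcc, Set.mem_uIcc] at ht
    rcases ht with ⟨h1, h2⟩ | ⟨h1, h2⟩
    · rw [abs_of_nonneg h1]; exact le_trans h2 (le_abs_self h)
    · rw [abs_of_nonpos h2]
      have := neg_le_abs h; linarith
  have hseg : segment ℝ (0 : ℝ) h ⊆ Metric.ball (0 : ℝ) δ := by
    intro t ht
    rw [Metric.mem_ball, dist_zero_right, Real.norm_eq_abs]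
    exact lt_of_le_of_lt (habs t ht) hhδ
  have key : ‖f h - f 0‖ ≤ ε * |h| ^ n * ‖h - 0‖ := by
    apply Convex.norm_image_sub_le_of_norm_hasDerivWithin_le
      (f' := f') (s := segment ℝ (0 : ℝ) h)
    · intro t ht
      exact ((hd t (hseg ht)).hasDerivWithinAt)
    · intro t ht
      have hb2 := hball (by
        rw [dist_zero_right, Real.norm_eq_abs]
        exact lt_of_le_of_lt (habs t ht) hhδ')
      rw [Real.norm_eq_abs] at hb2 ⊢
      calc |f' t| ≤ ε * |t ^ n| := hb2
        _ ≤ ε * |h| ^ n := by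
            rw [abs_pow]
            exact mul_le_mul_of_nonneg_left (pow_le_pow_left₀ (abs_nonneg t) (habs t ht) n)
              hε.le
    · exact (convex_segment _ _)
    · exact left_mem_segment _ _ _
    · exact right_mem_segment _ _ _
  rw [h0, sub_zero] at key
  calc |f h| ≤ ε * |h| ^ n * ‖h - 0‖ := key
    _ = ε * |h ^ (n + 1)| := by
        rw [sub_zero, Real.norm_eq_abs, abs_pow]; ring

/-- Third-order Taylor expansion with Peano remainder. -/
lemma taylor3_isLittleO {g : ℝ → ℝ} {x : ℝ} (hg : ContDiffAt ℝ 3 g x) :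
    (fun h : ℝ => g (x + h) - (g x + h * deriv g x + h ^ 2 / 2 * deriv (deriv g) x
        + h ^ 3 / 6 * deriv (deriv (deriv g)) x))
      =o[𝓝 (0 : ℝ)] fun h : ℝ => h ^ 3 := by
  obtain ⟨u, hu, hgu⟩ := hg.contDiffOn le_rfl (by simp)
  obtain ⟨δ, hδ, hball⟩ := Metric.mem_nhds_iff.1 hu
  have hgb : ContDiffOn ℝ 3 g (Metric.ball x δ) := hgu.mono hball
  have hopen : IsOpen (Metric.ball x δ) := Metric.isOpen_ball
  have hxmem : x ∈ Metric.ball x δ := Metric.mem_ball_self hδ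
  -- g differentiable on the ball
  have hd1 : ∀ t ∈ Metric.ball x δ, HasDerivAt g (deriv g t) t := by
    intro t ht
    exact (((hgb t ht).differentiableWithinAt (by norm_num)).differentiableAt
      (hopen.mem_nhds ht)).hasDerivAt
  -- deriv g is C² on the ball
  have hgb2 : ContDiffOn ℝ 2 (deriv g) (Metric.ball x δ) :=
    hgb.deriv_of_isOpen hopen (by norm_num)
  have hd2 : ∀ t ∈ Metric.ball x δ, HasDerivAt (deriv g) (deriv (deriv g) t) t := by
    intro t ht
    exact (((hgb2 t ht).differentiableWithinAt (by norm_num)).differentiableAt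
      (hopen.mem_nhds ht)).hasDerivAt
  have hgb3 : ContDiffOn ℝ 1 (deriv (deriv g)) (Metric.ball x δ) :=
    hgb2.deriv_of_isOpen hopen (by norm_num)
  have hd3 : HasDerivAt (deriv (deriv g)) (deriv (deriv (deriv g)) x) x :=
    (((hgb3 x hxmem).differentiableWithinAt (by norm_num)).differentiableAt
      (hopen.mem_nhds hxmem)).hasDerivAt
  -- translate: shifted derivative facts at 0
  have shift : ∀ t : ℝ, t ∈ Metric.ball (0 : ℝ) δ → x + t ∈ Metric.ball x δ := by
    intro t ht
    rw [Metric.mem_ball, dist_zero_right] at ht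
    rw [Metric.mem_ball]
    simpa [dist_eq_norm] using ht
  -- R2 = o(h)
  set d1 := deriv g x
  set d2 := deriv (deriv g) x
  set d3 := deriv (deriv (deriv g)) x
  have hR2 : (fun h : ℝ => deriv (deriv g) (x + h) - d2 - h * d3)
      =o[𝓝 (0 : ℝ)] fun h : ℝ => h ^ 1 := by
    have := hd3.isLittleO   -- (fun y => f y - f x - (y - x) • f') =o[𝓝 x] fun y => y - x
    have htend : Tendsto (fun h : ℝ => x + h) (𝓝 0) (𝓝 x) := by
      simpa using (continuous_add_left x).tendsto (0 : ℝ)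
    have hcomp := this.comp_tendsto htend
    simp only [Function.comp_def, add_sub_cancel_left, smul_eq_mul] at hcomp
    refine (hcomp.congr' ?_ ?_)
    · filter_upwards with h
      try ring
    · filter_upwards with h; rw [pow_one]
  -- R1 = o(h²)
  have hR1 : (fun h : ℝ => deriv g (x + h) - (d1 + h * d2 + h ^ 2 / 2 * d3))
      =o[𝓝 (0 : ℝ)] fun h : ℝ => h ^ 2 := by
    apply isLittleO_succ_of_deriv hδ (f' := fun h => deriv (deriv g) (x + h) - d2 - h * d3)
    · intro t ht
      have h1 : HasDerivAt (fun h : ℝ => deriv g (x + h)) (deriv (deriv g) (x + t)) t := by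
        have := (hd2 (x + t) (shift t ht)).comp t
          (((hasDerivAt_id t).const_add x))
        simpa [Function.comp_def] using this
      have h2 : HasDerivAt (fun h : ℝ => d1 + h * d2 + h ^ 2 / 2 * d3)
          (d2 + t * d3) t := by
        have : HasDerivAt (fun h : ℝ => d1 + h * d2 + h ^ 2 / 2 * d3)
            (0 + 1 * d2 + (2 * t ^ 1 / 2) * d3) t := by
          apply HasDerivAt.add
          apply HasDerivAt.add
          · exact hasDerivAt_const t d1
          · exact (hasDerivAt_id t).mul_const d2
          · exact ((hasDerivAt_pow 2 t).div_const 2).mul_const d3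
        convert this using 1; ring
      exact (h1.sub h2).congr_deriv (by ring)
    · simp [d1]
    · exact hR2
  -- R0 = o(h³)
  apply isLittleO_succ_of_deriv hδ
    (f' := fun h => deriv g (x + h) - (d1 + h * d2 + h ^ 2 / 2 * d3))
  · intro t ht
    have h1 : HasDerivAt (fun h : ℝ => g (x + h)) (deriv g (x + t)) t := by
      have := (hd1 (x + t) (shift t ht)).comp t (((hasDerivAt_id t).const_add x))
      simpa [Function.comp_def] using this
    have h2 : HasDerivAt (fun h : ℝ => g x + h * d1 + h ^ 2 / 2 * d2 + h ^ 3 / 6 * d3)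
        (d1 + t * d2 + t ^ 2 / 2 * d3) t := by
      have : HasDerivAt (fun h : ℝ => g x + h * d1 + h ^ 2 / 2 * d2 + h ^ 3 / 6 * d3)
          (0 + 1 * d1 + (2 * t ^ 1 / 2) * d2 + (3 * t ^ 2 / 6) * d3) t := by
        apply HasDerivAt.add
        apply HasDerivAt.add
        apply HasDerivAt.add
        · exact hasDerivAt_const t (g x)
        · exact (hasDerivAt_id t).mul_const d1
        · exact ((hasDerivAt_pow 2 t).div_const 2).mul_const d2
        · exact ((hasDerivAt_pow 3 t).div_const 6).mul_const d3
      convert this using 1; ring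
    exact h1.sub h2
  · simp
  · exact hR1

/-- If `g` is three times continuously differentiable near `x`, then as `h → 0⁺`,
`L(g,x,h) = g(x) + (h/2) g′(x) + (h²/12) g″(x) + (h³/12) g‴(x) + o(h³)`. -/
theorem left_reconstruction_expansion
    (g : ℝ → ℝ) (x : ℝ) (hg : ContDiffAt ℝ 3 g x) :
    (fun h : ℝ => Lrec g x h -
        (g x + (h / 2) * deriv g x + (h ^ 2 / 12) * deriv (deriv g) x
          + (h ^ 3 / 12) * deriv (deriv (deriv g)) x))
      =o[𝓝[>] (0 : ℝ)] fun h : ℝ => h ^ 3 := by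
  have hR := taylor3_isLittleO hg
  set d1 := deriv g x
  set d2 := deriv (deriv g) x
  set d3 := deriv (deriv (deriv g)) x
  set R : ℝ → ℝ := fun h => g (x + h) - (g x + h * d1 + h ^ 2 / 2 * d2 + h ^ 3 / 6 * d3)
    with hRdef
  -- R(-h) = o(h³)
  have hRneg : (fun h : ℝ => R (-h)) =o[𝓝 (0 : ℝ)] fun h : ℝ => h ^ 3 := by
    have hcomp := hR.comp_tendsto (by simpa using (continuous_neg.tendsto (0 : ℝ)))
    have : (fun h : ℝ => (-h) ^ 3) =O[𝓝 (0 : ℝ)] fun h : ℝ => h ^ 3 := by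
      apply Asymptotics.isBigO_of_le
      intro h
      simp [abs_pow]
    exact hcomp.trans_isBigO this
  -- combine
  have hmain : (fun h : ℝ => (1 / 3 : ℝ) * R h - (1 / 6 : ℝ) * R (-h))
      =o[𝓝 (0 : ℝ)] fun h : ℝ => h ^ 3 :=
    (hR.const_mul_left _).sub (hRneg.const_mul_left _)
  have heq : ∀ h : ℝ, Lrec g x h -
        (g x + (h / 2) * d1 + (h ^ 2 / 12) * d2 + (h ^ 3 / 12) * d3)
      = (1 / 3 : ℝ) * R h - (1 / 6 : ℝ) * R (-h) := by
    intro h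
    simp only [hRdef, Lrec]
    have : x - h = x + (-h) := by ring
    rw [this]
    ring
  refine ((hmain.mono nhdsWithin_le_nhds).congr' ?_ (by rfl))
  filter_upwards with h
  exact (heq h).symm
end

section
/- Let u : ℝ → ℝ be three times continuously differentiable on a neighborhood of x ∈ ℝ and let g(y) = u(y)²/2 (the Burgers flux composed with u). Then as h → 0⁺ the κ = 1/3 left reconstructed flux satisfies L(g,x,h) = u(x)²/2 + (h/2)·u(x)u′(x) + (h²/12)·[u′(x)² + u(x)u″(x)] + O(h³), which matches the expansion of the exact face value of the quadratic function whose cell averages equal the nodal flux values. -/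
open Filter Topology Asymptotics Set

/-- Second-order Taylor expansion with `O(h³)` remainder, right-sided version. -/
private lemma taylor2_right {f : ℝ → ℝ} {x : ℝ} (hf : ContDiffAt ℝ 3 f x) :
    (fun h : ℝ => f (x + h) - (f x + h * deriv f x + h ^ 2 / 2 * deriv (deriv f) x))
      =O[𝓝[>] (0 : ℝ)] fun h : ℝ => h ^ 3 := by
  obtain ⟨v, hv, hfv⟩ := hf.contDiffOn le_rfl (by simp)
  obtain ⟨r, hr0, hball⟩ := Metric.mem_nhds_iff.1 hv
  have hfb : ContDiffOn ℝ 3 f (Metric.ball x r) := hfv.mono hball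
  set ε : ℝ := r / 2 with hε
  have hε0 : 0 < ε := by positivity
  have hxlt : x < x + ε := by linarith
  set s : Set ℝ := Icc x (x + ε) with hsdef
  have hsub : s ⊆ Metric.ball x r := by
    intro y hy
    rw [Metric.mem_ball, Real.dist_eq, abs_lt]
    exact ⟨by linarith [hy.1], by linarith [hy.2]⟩
  have hs : UniqueDiffOn ℝ s := uniqueDiffOn_Icc hxlt
  have hxs : x ∈ s := ⟨le_rfl, hxlt.le⟩
  have hfs : ContDiffOn ℝ 3 f s := hfb.mono hsub
  have hdiffb : ∀ y ∈ s, DifferentiableAt ℝ f y := fun y hy =>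
    ((hfb y (hsub hy)).contDiffAt (Metric.isOpen_ball.mem_nhds (hsub hy))).differentiableAt
      (by norm_num)
  have hd1 : iteratedDerivWithin 1 f s x = deriv f x := by
    rw [iteratedDerivWithin_one]
    exact (hdiffb x hxs).derivWithin (hs x hxs)
  have hderivC : ContDiffOn ℝ 2 (deriv f) (Metric.ball x r) :=
    hfb.deriv_of_isOpen Metric.isOpen_ball (by norm_num)
  have hderivd : DifferentiableAt ℝ (deriv f) x :=
    ((hderivC x (hsub hxs)).contDiffAt (Metric.isOpen_ball.mem_nhds (hsub hxs))).differentiableAt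
      (by norm_num)
  have hd2 : iteratedDerivWithin 2 f s x = deriv (deriv f) x := by
    have e1 : iteratedDerivWithin 2 f s x = derivWithin (iteratedDerivWithin 1 f s) s x :=
      congrFun iteratedDerivWithin_succ x
    have e2 : derivWithin (iteratedDerivWithin 1 f s) s x = derivWithin (deriv f) s x := by
      apply derivWithin_congr
      · intro y hy
        rw [iteratedDerivWithin_one]
        exact (hdiffb y hy).derivWithin (hs y hy)
      · rw [iteratedDerivWithin_one]
        exact (hdiffb x hxs).derivWithin (hs x hxs)
    rw [e1, e2]
    exact hderivd.derivWithin (hs x hxs)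
  have hcont : ContinuousOn (iteratedDerivWithin 3 f s) s :=
    hfs.continuousOn_iteratedDerivWithin (by norm_num) hs
  obtain ⟨C, hC⟩ := isCompact_Icc.exists_bound_of_continuousOn hcont
  have htay : ∀ h : ℝ, taylorWithinEval f 2 s x (x + h)
      = f x + h * deriv f x + h ^ 2 / 2 * deriv (deriv f) x := by
    intro h
    rw [taylor_within_apply]
    simp only [Finset.sum_range_succ, Finset.sum_range_zero, iteratedDerivWithin_zero,
      hd1, hd2, smul_eq_mul, add_sub_cancel_left]
    push_cast [Nat.factorial]
    ring
  rw [Asymptotics.isBigO_iff]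
  refine ⟨C / 2, ?_⟩
  filter_upwards [Ioc_mem_nhdsGT_of_mem (⟨le_rfl, hε0⟩ : (0:ℝ) ∈ Ico (0:ℝ) ε)] with h hh
  have hmem : x + h ∈ s := ⟨by linarith [hh.1.le], by linarith [hh.2]⟩
  have hfs' : ContDiffOn ℝ ((2:ℕ) + 1) f s := by exact_mod_cast hfs
  have hbd := taylor_mean_remainder_bound (n := 2) hxlt.le hfs' hmem hC
  rw [htay h] at hbd
  have h0 : (0:ℝ) < h := hh.1
  have : ‖(h:ℝ) ^ 3‖ = h ^ 3 := by
    rw [Real.norm_eq_abs, abs_of_pos (by positivity)]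
  rw [this]
  refine le_trans hbd (le_of_eq ?_)
  have e : x + h - x = h := by ring
  rw [e]
  norm_num [Nat.factorial]
  try ring

/-- Second-order Taylor expansion with `O(h³)` remainder, left-sided version. -/
private lemma taylor2_left {f : ℝ → ℝ} {x : ℝ} (hf : ContDiffAt ℝ 3 f x) :
    (fun h : ℝ => f (x - h) - (f x - h * deriv f x + h ^ 2 / 2 * deriv (deriv f) x))
      =O[𝓝[>] (0 : ℝ)] fun h : ℝ => h ^ 3 := by
  set F : ℝ → ℝ := fun y => f (2 * x - y) with hFdef
  have hx : 2 * x - x = x := by ring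
  have hcomp : ContDiffAt ℝ 3 F x := by
    have hf' : ContDiffAt ℝ 3 f (2 * x - x) := by rw [hx]; exact hf
    exact ContDiffAt.comp x hf' (contDiff_const.sub contDiff_id).contDiffAt
  have h1 : deriv F = fun y => -deriv f (2 * x - y) := funext fun y => deriv_comp_const_sub ..
  have h3 : deriv F x = -deriv f x := by rw [h1]; simp [hx]
  have h2 : deriv (deriv F) x = deriv (deriv f) x := by
    rw [h1]
    have : deriv (fun y => -deriv f (2 * x - y)) x
        = -deriv (fun y => deriv f (2 * x - y)) x := by
      rw [deriv.fun_neg]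
    rw [this, deriv_comp_const_sub, hx, neg_neg]
  have hbig := taylor2_right hcomp
  refine hbig.congr (fun h => ?_) (fun _ => rfl)
  have e : 2 * x - (x + h) = x - h := by ring
  rw [h3, h2]
  simp only [hFdef, e, hx]
  ring

/-- For `u` three times continuously differentiable near `x` and `g(y) = u(y)²/2`
(the Burgers flux composed with the solution), the `κ = 1/3` left reconstructed flux
satisfies `L(g,x,h) = u(x)²/2 + (h/2) u u′ + (h²/12) [u′² + u u″] + O(h³)` as `h → 0⁺`,
matching the expansion of the exact face value of the quadratic function whose
cell averages equal the nodal flux values. -/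
theorem reconstructed_flux_expansion
    (u : ℝ → ℝ) (x : ℝ) (hu : ContDiffAt ℝ 3 u x)
    (g : ℝ → ℝ) (hg : ∀ y : ℝ, g y = u y ^ 2 / 2) :
    (fun h : ℝ => Lrec g x h -
        (u x ^ 2 / 2 + (h / 2) * (u x * deriv u x)
          + (h ^ 2 / 12) * ((deriv u x) ^ 2 + u x * deriv (deriv u) x)))
      =O[𝓝[>] (0 : ℝ)] fun h : ℝ => h ^ 3 := by
  have hgf : g = fun y => u y ^ 2 / 2 := funext hg
  have hgC : ContDiffAt ℝ 3 g x := by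
    rw [hgf]; exact (hu.pow 2).div_const 2
  -- u is C³ on a ball around x
  obtain ⟨v, hv, huv⟩ := hu.contDiffOn le_rfl (by simp)
  obtain ⟨r, hr0, hball⟩ := Metric.mem_nhds_iff.1 hv
  have hub : ContDiffOn ℝ 3 u (Metric.ball x r) := huv.mono hball
  have hudiff : ∀ y ∈ Metric.ball x r, DifferentiableAt ℝ u y := fun y hy =>
    ((hub y hy).contDiffAt (Metric.isOpen_ball.mem_nhds hy)).differentiableAt (by norm_num)
  have hxball : x ∈ Metric.ball x r := Metric.mem_ball_self hr0
  have hdu : DifferentiableAt ℝ (deriv u) x :=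
    (((hub.deriv_of_isOpen (m := 2) Metric.isOpen_ball (by norm_num)) x hxball).contDiffAt
      (Metric.isOpen_ball.mem_nhds hxball)).differentiableAt (by norm_num)
  have hderiv_g : deriv g =ᶠ[𝓝 x] fun y => u y * deriv u y := by
    filter_upwards [Metric.isOpen_ball.mem_nhds hxball] with y hy
    have h1 : HasDerivAt g (u y * deriv u y) y := by
      rw [hgf]
      have : HasDerivAt (fun y => u y ^ 2 / 2) ((2:ℕ) * u y ^ (2 - 1) * deriv u y / 2) y :=
        (((hudiff y hy).hasDerivAt).pow 2).div_const 2
      convert this using 1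
      push_cast
      ring
    exact h1.deriv
  have e2 : u x * deriv u x = deriv g x := (hderiv_g.self_of_nhds).symm
  have e3 : (deriv u x) ^ 2 + u x * deriv (deriv u) x = deriv (deriv g) x := by
    rw [hderiv_g.deriv_eq]
    have h1 : HasDerivAt (fun y => u y * deriv u y)
        (deriv u x * deriv u x + u x * deriv (deriv u) x) x :=
      ((hudiff x hxball).hasDerivAt).mul hdu.hasDerivAt
    rw [h1.deriv]
    ring
  have e1 : u x ^ 2 / 2 = g x := (hg x).symm
  have key : (fun h : ℝ => Lrec g x h -
        (u x ^ 2 / 2 + (h / 2) * (u x * deriv u x)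
          + (h ^ 2 / 12) * ((deriv u x) ^ 2 + u x * deriv (deriv u) x)))
      = fun h : ℝ =>
          (1 / 3) * (g (x + h) - (g x + h * deriv g x + h ^ 2 / 2 * deriv (deriv g) x))
        - (1 / 6) * (g (x - h) - (g x - h * deriv g x + h ^ 2 / 2 * deriv (deriv g) x)) := by
    funext h
    rw [e1, e2, e3]
    simp only [Lrec]
    ring
  rw [key]
  exact ((taylor2_right hgC).const_mul_left _).sub ((taylor2_left hgC).const_mul_left _)
end

section
/- Let u : ℝ → ℝ be three times continuously differentiable on a neighborhood of x ∈ ℝ, let f(v) = v²/2, and let g(y) = u(y)²/2. Then as h → 0⁺, f(L(u,x,h)) − L(g,x,h) = (h²/24)·u′(x)² + o(h²). In particular, if u′(x) ≠ 0 then the flux evaluated at the reconstructed solution differs from the reconstructed flux by a nonvanishing second-order term. -/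
open Filter Topology Asymptotics

/-- First-order Taylor remainder is `O(h²)` for a `C³` function. -/
lemma taylor1_isBigO (u : ℝ → ℝ) (x : ℝ) (hu : ContDiffAt ℝ 3 u x) :
    (fun h : ℝ => u (x + h) - u x - deriv u x * h) =O[𝓝 (0 : ℝ)] fun h => h ^ 2 := by
  have hd2 : ContDiffAt ℝ 1 (deriv u) x := by
    have h1 : ContDiffAt ℝ 1 (fun y => fderiv ℝ u y 1) x :=
      ((hu.fderiv_right (m := 2) (by norm_num)).of_le one_le_two).clm_apply contDiffAt_const
    have : (fun y => fderiv ℝ u y 1) = deriv u := funext fun y => fderiv_apply_one_eq_deriv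
    rwa [this] at h1
  obtain ⟨K, t, ht, hlip⟩ := hd2.exists_lipschitzOnWith
  have hev : {y : ℝ | DifferentiableAt ℝ u y} ∈ 𝓝 x := by
    filter_upwards [hu.eventually (by norm_num)] with y hy
    exact hy.differentiableAt (by norm_num)
  obtain ⟨δ, hδ0, hδ⟩ := Metric.mem_nhds_iff.mp (Filter.inter_mem ht hev)
  rw [isBigO_iff]
  refine ⟨K, ?_⟩
  have hsmall : ∀ᶠ h : ℝ in 𝓝 0, |h| < δ / 2 := by
    have := Metric.ball_mem_nhds (0 : ℝ) (by positivity : (0:ℝ) < δ / 2)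
    filter_upwards [this] with h hh
    simpa [Real.dist_eq] using hh
  filter_upwards [hsmall] with h hh
  set s : Set ℝ := Metric.closedBall x |h| with hs
  have hsub : s ⊆ Metric.ball x δ := by
    intro y hy
    have : dist y x ≤ |h| := Metric.mem_closedBall.mp hy
    exact Metric.mem_ball.mpr (lt_of_le_of_lt this (by linarith [abs_nonneg h]))
  have hdiff : ∀ y ∈ s, DifferentiableAt ℝ u y := fun y hy => (hδ (hsub hy)).2
  have hmem : ∀ y ∈ s, y ∈ t := fun y hy => (hδ (hsub hy)).1
  have hxs : x ∈ s := Metric.mem_closedBall_self (abs_nonneg h)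
  have hxhs : x + h ∈ s := by
    simp [hs, Metric.mem_closedBall, Real.dist_eq]
  have key : ‖(fun y => u y - deriv u x * y) (x + h) - (fun y => u y - deriv u x * y) x‖
      ≤ K * |h| * ‖(x + h) - x‖ := by
    refine Convex.norm_image_sub_le_of_norm_hasDerivWithin_le
      (f := fun y => u y - deriv u x * y) (f' := fun y => deriv u y - deriv u x)
      (C := (K : ℝ) * |h|) (fun y hy => ?_) (fun y hy => ?_)
      (convex_closedBall x |h|) hxs hxhs
    · have : HasDerivAt (fun y => u y - deriv u x * y) (deriv u y - deriv u x) y := by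
        have := ((hdiff y hy).hasDerivAt).sub ((hasDerivAt_id y).const_mul (deriv u x))
        simp only [id_eq, mul_one] at this
        exact this
      exact this.hasDerivWithinAt
    · have := hlip.dist_le_mul y (hmem y hy) x (hmem x hxs)
      have hdy : dist y x ≤ |h| := Metric.mem_closedBall.mp hy
      have hK : (0:ℝ) ≤ K := K.coe_nonneg
      calc ‖deriv u y - deriv u x‖ = dist (deriv u y) (deriv u x) := by
            rw [dist_eq_norm]
        _ ≤ K * dist y x := this
        _ ≤ K * |h| := by nlinarith
  have habs : ‖(x + h) - x‖ = |h| := by simp [Real.norm_eq_abs]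
  rw [habs] at key
  have : u (x + h) - u x - deriv u x * h
      = (fun y => u y - deriv u x * y) (x + h) - (fun y => u y - deriv u x * y) x := by
    ring
  rw [Real.norm_eq_abs, Real.norm_eq_abs, this]
  calc |(fun y => u y - deriv u x * y) (x + h) - (fun y => u y - deriv u x * y) x|
      ≤ K * |h| * |h| := key
    _ = K * |h ^ 2| := by rw [abs_pow]; ring

/-- For the Burgers flux `f(v) = v²/2`, `g(y) = u(y)²/2` and `u` three times continuously
differentiable near `x`, the flux of the reconstructed solution differs from the
reconstructed flux by `(h²/24) u′(x)² + o(h²)` as `h → 0⁺`; in particular if `u′(x) ≠ 0`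
this difference is a nonvanishing second-order term. -/
theorem flux_of_reconstruction_minus_reconstructed_flux
    (u : ℝ → ℝ) (x : ℝ) (hu : ContDiffAt ℝ 3 u x)
    (f : ℝ → ℝ) (hf : ∀ v : ℝ, f v = v ^ 2 / 2)
    (g : ℝ → ℝ) (hg : ∀ y : ℝ, g y = u y ^ 2 / 2) :
    ((fun h : ℝ => f (Lrec u x h) - Lrec g x h - (h ^ 2 / 24) * (deriv u x) ^ 2)
        =o[𝓝[>] (0 : ℝ)] fun h : ℝ => h ^ 2) ∧
    (deriv u x ≠ 0 →
      ¬ ((fun h : ℝ => f (Lrec u x h) - Lrec g x h)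
          =o[𝓝[>] (0 : ℝ)] fun h : ℝ => h ^ 2)) := by
  set d := deriv u x with hd
  set e₁ : ℝ → ℝ := fun h => u (x + h) - u x - d * h with he₁
  set e₂ : ℝ → ℝ := fun h => u (x - h) - u x + d * h with he₂
  have hE1 : e₁ =O[𝓝 (0 : ℝ)] fun h => h ^ 2 := taylor1_isBigO u x hu
  have hE2 : e₂ =O[𝓝 (0 : ℝ)] fun h => h ^ 2 := by
    have hneg : Tendsto (fun h : ℝ => -h) (𝓝 0) (𝓝 0) := by
      simpa using (tendsto_id (x := 𝓝 (0:ℝ))).neg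
    have := hE1.comp_tendsto hneg
    have heq : (e₁ ∘ fun h : ℝ => -h) = e₂ := by
      funext h; simp only [he₁, he₂, Function.comp]; ring
    have heq2 : ((fun h : ℝ => h ^ 2) ∘ fun h : ℝ => -h) = fun h : ℝ => h ^ 2 := by
      funext h; simp [Function.comp]
    rwa [heq, heq2] at this
  -- h =o 1 and h^2 =o h near 0
  have hi : (fun h : ℝ => h) =o[𝓝 (0 : ℝ)] fun _ => (1 : ℝ) :=
    (isLittleO_one_iff ℝ).mpr (by exact tendsto_id (x := 𝓝 (0:ℝ)))
  have hsq : (fun h : ℝ => h ^ 2) =o[𝓝 (0 : ℝ)] fun h => h := by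
    have := hi.mul_isBigO (isBigO_refl (fun h : ℝ => h) (𝓝 0))
    simpa [sq] using this
  have hE1o : e₁ =o[𝓝 (0 : ℝ)] fun h => h := hE1.trans_isLittleO hsq
  have hE2o : e₂ =o[𝓝 (0 : ℝ)] fun h => h := hE2.trans_isLittleO hsq
  -- each error term is o(h²)
  have t1 : (fun h : ℝ => h * e₁ h) =o[𝓝 (0 : ℝ)] fun h => h ^ 2 := by
    have := (isBigO_refl (fun h : ℝ => h) (𝓝 0)).mul_isLittleO hE1o
    simpa [sq] using this
  have t2 : (fun h : ℝ => h * e₂ h) =o[𝓝 (0 : ℝ)] fun h => h ^ 2 := by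
    have := (isBigO_refl (fun h : ℝ => h) (𝓝 0)).mul_isLittleO hE2o
    simpa [sq] using this
  have t3 : (fun h : ℝ => e₁ h * e₁ h) =o[𝓝 (0 : ℝ)] fun h => h ^ 2 := by
    have := hE1o.mul hE1o
    simpa [sq] using this
  have t4 : (fun h : ℝ => e₂ h * e₂ h) =o[𝓝 (0 : ℝ)] fun h => h ^ 2 := by
    have := hE2o.mul hE2o
    simpa [sq] using this
  have t5 : (fun h : ℝ => e₁ h * e₂ h) =o[𝓝 (0 : ℝ)] fun h => h ^ 2 := by
    have := hE1o.mul hE2o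
    simpa [sq] using this
  have main : (fun h : ℝ => f (Lrec u x h) - Lrec g x h - (h ^ 2 / 24) * d ^ 2)
      =o[𝓝 (0 : ℝ)] fun h : ℝ => h ^ 2 := by
    have heq : (fun h : ℝ => f (Lrec u x h) - Lrec g x h - (h ^ 2 / 24) * d ^ 2)
        = fun h : ℝ => (-12 * d / 72) * (h * e₁ h) + (-18 * d / 72) * (h * e₂ h)
          + (-8 / 72) * (e₁ h * e₁ h) + (7 / 72) * (e₂ h * e₂ h)
          + (-4 / 72) * (e₁ h * e₂ h) := by
      funext h
      have hb : u (x + h) = u x + d * h + e₁ h := by simp only [he₁]; ring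
      have hc : u (x - h) = u x - d * h + e₂ h := by simp only [he₂]; ring
      simp only [Lrec, hf, hg, hb, hc]
      ring
    rw [heq]
    exact ((((t1.const_mul_left _).add (t2.const_mul_left _)).add
      (t3.const_mul_left _)).add (t4.const_mul_left _)).add (t5.const_mul_left _)
  have part1 : (fun h : ℝ => f (Lrec u x h) - Lrec g x h - (h ^ 2 / 24) * d ^ 2)
      =o[𝓝[>] (0 : ℝ)] fun h : ℝ => h ^ 2 := main.mono nhdsWithin_le_nhds
  refine ⟨part1, fun hdne H => ?_⟩
  have hquad : (fun h : ℝ => (h ^ 2 / 24) * d ^ 2) =o[𝓝[>] (0 : ℝ)] fun h : ℝ => h ^ 2 := by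
    have := H.sub part1
    simpa using this
  have hε : (0 : ℝ) < d ^ 2 / 48 := by positivity
  have hev := hquad.def hε
  have hpos : ∀ᶠ h : ℝ in 𝓝[>] (0 : ℝ), (0 : ℝ) < h := eventually_mem_nhdsWithin
  obtain ⟨h, hh1, hh2⟩ := (hev.and hpos).exists
  have hh2' : (0 : ℝ) < h := hh2
  have : ‖h ^ 2 / 24 * d ^ 2‖ ≤ d ^ 2 / 48 * ‖h ^ 2‖ := hh1
  rw [Real.norm_eq_abs, Real.norm_eq_abs, abs_of_nonneg (by positivity),
    abs_of_nonneg (by positivity)] at this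
  have hd2 : (0 : ℝ) < d ^ 2 := by positivity
  nlinarith [sq_nonneg h, mul_pos (mul_pos hh2' hh2') hd2]
end

section
/- Let u : ℝ → ℝ be three times continuously differentiable on a neighborhood of x ∈ ℝ. Then as h → 0⁺ the difference of the κ = 1/3 right and left reconstructed states at the face x + h/2 satisfies R(u,x,h) − L(u,x,h) = −(h³/6)·u‴(x) + o(h³); in particular the jump across the face, and hence the dissipation term of the numerical flux, is of third order in h. -/
open Filter Topology Asymptotics

/-- Van Leer's `κ = 1/3` right reconstructed face value at the face `x + h/2`. -/
noncomputable def Rrec (g : ℝ → ℝ) (x h : ℝ) : ℝ :=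
  (1 / 6) * (g (x + h) + g x) + (2 / 3) * (g (x + h) - (g (x + 2 * h) - g x) / 4)

lemma step_littleO {g : ℝ → ℝ} {n : ℕ} (hg0 : g 0 = 0)
    (hdiff : ∀ᶠ t in 𝓝 (0:ℝ), DifferentiableAt ℝ g t)
    (ho : (deriv g) =o[𝓝 (0:ℝ)] fun t => t ^ n) :
    g =o[𝓝 (0:ℝ)] fun t => t ^ (n + 1) := by
  rw [isLittleO_iff]
  intro c hc
  have h1 := ho.def hc
  have h2 := hdiff.and h1
  rw [Metric.eventually_nhds_iff_ball] at h2 ⊢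
  obtain ⟨r, hr, hball⟩ := h2
  refine ⟨r, hr, fun t ht => ?_⟩
  have hsub : Set.uIcc (0:ℝ) t ⊆ Metric.ball (0:ℝ) r := by
    rw [← segment_eq_uIcc]
    exact (convex_ball (0:ℝ) r).segment_subset (Metric.mem_ball_self hr) ht
  have key : ‖g t - g 0‖ ≤ (c * |t| ^ n) * ‖t - 0‖ := by
    apply Convex.norm_image_sub_le_of_norm_hasDerivWithin_le
      (f' := deriv g)
      (fun s hs => ((hball s (hsub hs)).1.hasDerivAt).hasDerivWithinAt)
      (fun s hs => ?_) (convex_uIcc _ _) (Set.left_mem_uIcc) (Set.right_mem_uIcc)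
    have h3 := (hball s (hsub hs)).2
    have h4 : |s| ≤ |t| := by
      rcases Set.mem_uIcc.1 hs with ⟨h5, h6⟩ | ⟨h5, h6⟩ <;> rw [abs_le] <;>
        constructor <;> cases abs_cases t <;> linarith
    calc ‖deriv g s‖ ≤ c * ‖s ^ n‖ := h3
      _ ≤ c * |t| ^ n := by
          rw [Real.norm_eq_abs, abs_pow]
          exact mul_le_mul_of_nonneg_left (pow_le_pow_left₀ (abs_nonneg _) h4 n) hc.le
  simp only [hg0, sub_zero] at key
  calc ‖g t‖ ≤ (c * |t| ^ n) * ‖t‖ := key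
    _ = c * ‖t ^ (n+1)‖ := by
        rw [Real.norm_eq_abs, Real.norm_eq_abs, abs_pow]; ring

lemma taylor3_littleO (u : ℝ → ℝ) (x : ℝ) (hu : ContDiffAt ℝ 3 u x) :
    (fun τ : ℝ => u (x + τ) - (u x + deriv u x * τ + deriv (deriv u) x / 2 * τ ^ 2
        + deriv (deriv (deriv u)) x / 6 * τ ^ 3))
      =o[𝓝 (0 : ℝ)] fun τ => τ ^ 3 := by
  obtain ⟨s, hs, hcd⟩ := hu.contDiffOn le_rfl (by simp)
  obtain ⟨t, hts, hto, hxt⟩ := mem_nhds_iff.1 hs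
  have hcd3 : ContDiffOn ℝ 3 u t := hcd.mono hts
  have h3 : ContDiffOn ℝ ((2 : WithTop ℕ∞) + 1) u t := by
    rw [show ((2 : WithTop ℕ∞) + 1) = 3 by norm_num]; exact hcd3
  rw [contDiffOn_succ_iff_deriv_of_isOpen hto] at h3
  obtain ⟨hdu, -, hcd2⟩ := h3
  have h2 : ContDiffOn ℝ ((1 : WithTop ℕ∞) + 1) (deriv u) t := by
    rw [show ((1 : WithTop ℕ∞) + 1) = 2 by norm_num]; exact hcd2
  rw [contDiffOn_succ_iff_deriv_of_isOpen hto] at h2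
  obtain ⟨hdu2, -, hcd1⟩ := h2
  have h1 : ContDiffOn ℝ ((0 : WithTop ℕ∞) + 1) (deriv (deriv u)) t := by
    rw [show ((0 : WithTop ℕ∞) + 1) = 1 by norm_num]; exact hcd1
  rw [contDiffOn_succ_iff_deriv_of_isOpen hto] at h1
  obtain ⟨hdu3, -, hcd0⟩ := h1
  rw [contDiffOn_zero] at hcd0
  -- eventual membership of `x + τ` in `t`
  have htend : Tendsto (fun τ : ℝ => x + τ) (𝓝 0) (𝓝 x) := by
    have hcont : Continuous (fun τ : ℝ => x + τ) := continuous_const.add continuous_id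
    have := hcont.tendsto (0 : ℝ)
    simpa using this
  have hmem : ∀ᶠ τ in 𝓝 (0:ℝ), x + τ ∈ t := htend.eventually_mem (hto.mem_nhds hxt)
  -- continuity of third derivative at x
  have hc3 : Tendsto (fun τ : ℝ => deriv (deriv (deriv u)) (x + τ))
      (𝓝 0) (𝓝 (deriv (deriv (deriv u)) x)) :=
    ((hcd0.continuousAt (hto.mem_nhds hxt)).tendsto).comp htend
  set a1 := deriv u x
  set a2 := deriv (deriv u) x
  set a3 := deriv (deriv (deriv u)) x
  -- second level
  have hP2 : (fun τ : ℝ => deriv (deriv u) (x + τ) - (a2 + a3 * τ))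
      =o[𝓝 (0:ℝ)] fun τ => τ ^ (0 + 1) := by
    have hder : ∀ᶠ τ in 𝓝 (0:ℝ), HasDerivAt
        (fun τ : ℝ => deriv (deriv u) (x + τ) - (a2 + a3 * τ))
        (deriv (deriv (deriv u)) (x + τ) - a3) τ := by
      filter_upwards [hmem] with τ hτ
      have hin : HasDerivAt (fun τ : ℝ => deriv (deriv u) (x + τ))
          (deriv (deriv (deriv u)) (x + τ)) τ := by
        have h := (hdu3.differentiableAt (hto.mem_nhds hτ)).hasDerivAt
        have := h.comp τ ((hasDerivAt_id τ).const_add x)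
        rw [mul_one] at this; exact this
      have hq : HasDerivAt (fun τ : ℝ => a2 + a3 * τ) a3 τ := by
        simpa using ((hasDerivAt_id τ).const_mul a3).const_add a2
      exact hin.sub hq
    apply step_littleO (by simp [a2])
    · exact hder.mono fun τ h => h.differentiableAt
    · have heq : deriv (fun τ : ℝ => deriv (deriv u) (x + τ) - (a2 + a3 * τ))
          =ᶠ[𝓝 (0:ℝ)] fun τ => deriv (deriv (deriv u)) (x + τ) - a3 :=
        hder.mono fun τ h => h.deriv
      refine heq.trans_isLittleO ?_
      have : Tendsto (fun τ : ℝ => deriv (deriv (deriv u)) (x + τ) - a3) (𝓝 0) (𝓝 0) := by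
        simpa using hc3.sub_const a3
      have ho := (isLittleO_one_iff ℝ).2 this
      exact ho.congr' EventuallyEq.rfl (Eventually.of_forall fun τ => (pow_zero τ).symm)
  -- first level
  have hP1 : (fun τ : ℝ => deriv u (x + τ) - (a1 + a2 * τ + a3 / 2 * τ ^ 2))
      =o[𝓝 (0:ℝ)] fun τ => τ ^ (1 + 1) := by
    have hder : ∀ᶠ τ in 𝓝 (0:ℝ), HasDerivAt
        (fun τ : ℝ => deriv u (x + τ) - (a1 + a2 * τ + a3 / 2 * τ ^ 2))
        (deriv (deriv u) (x + τ) - (a2 + a3 * τ)) τ := by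
      filter_upwards [hmem] with τ hτ
      have hin : HasDerivAt (fun τ : ℝ => deriv u (x + τ))
          (deriv (deriv u) (x + τ)) τ := by
        have h := (hdu2.differentiableAt (hto.mem_nhds hτ)).hasDerivAt
        have := h.comp τ ((hasDerivAt_id τ).const_add x)
        rw [mul_one] at this; exact this
      have hq : HasDerivAt (fun τ : ℝ => a1 + a2 * τ + a3 / 2 * τ ^ 2)
          (a2 + a3 * τ) τ := by
        have := (((hasDerivAt_id τ).const_mul a2).const_add a1).add
          ((hasDerivAt_pow 2 τ).const_mul (a3 / 2))
        refine this.congr_deriv ?_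
        push_cast
        ring
      exact hin.sub hq
    apply step_littleO (by simp [a1])
    · exact hder.mono fun τ h => h.differentiableAt
    · have heq : deriv (fun τ : ℝ => deriv u (x + τ) - (a1 + a2 * τ + a3 / 2 * τ ^ 2))
          =ᶠ[𝓝 (0:ℝ)] fun τ => deriv (deriv u) (x + τ) - (a2 + a3 * τ) :=
        hder.mono fun τ h => h.deriv
      exact heq.trans_isLittleO hP2
  -- zeroth level
  have hP0 : (fun τ : ℝ => u (x + τ) - (u x + a1 * τ + a2 / 2 * τ ^ 2 + a3 / 6 * τ ^ 3))
      =o[𝓝 (0:ℝ)] fun τ => τ ^ (2 + 1) := by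
    have hder : ∀ᶠ τ in 𝓝 (0:ℝ), HasDerivAt
        (fun τ : ℝ => u (x + τ) - (u x + a1 * τ + a2 / 2 * τ ^ 2 + a3 / 6 * τ ^ 3))
        (deriv u (x + τ) - (a1 + a2 * τ + a3 / 2 * τ ^ 2)) τ := by
      filter_upwards [hmem] with τ hτ
      have hin : HasDerivAt (fun τ : ℝ => u (x + τ)) (deriv u (x + τ)) τ := by
        have h := (hdu.differentiableAt (hto.mem_nhds hτ)).hasDerivAt
        have := h.comp τ ((hasDerivAt_id τ).const_add x)
        rw [mul_one] at this; exact this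
      have hq : HasDerivAt (fun τ : ℝ => u x + a1 * τ + a2 / 2 * τ ^ 2 + a3 / 6 * τ ^ 3)
          (a1 + a2 * τ + a3 / 2 * τ ^ 2) τ := by
        have := ((((hasDerivAt_id τ).const_mul a1).const_add (u x)).add
          ((hasDerivAt_pow 2 τ).const_mul (a2 / 2))).add
          ((hasDerivAt_pow 3 τ).const_mul (a3 / 6))
        refine this.congr_deriv ?_
        push_cast
        ring
      exact hin.sub hq
    apply step_littleO (by simp)
    · exact hder.mono fun τ h => h.differentiableAt
    · have heq : deriv (fun τ : ℝ => u (x + τ) - (u x + a1 * τ + a2 / 2 * τ ^ 2 + a3 / 6 * τ ^ 3))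
          =ᶠ[𝓝 (0:ℝ)] fun τ => deriv u (x + τ) - (a1 + a2 * τ + a3 / 2 * τ ^ 2) :=
        hder.mono fun τ h => h.deriv
      exact heq.trans_isLittleO hP1
  exact hP0

/-- For `u` three times continuously differentiable near `x`, the jump between the
`κ = 1/3` right and left reconstructed states at the face `x + h/2` satisfies
`R(u,x,h) − L(u,x,h) = −(h³/6) u‴(x) + o(h³)` as `h → 0⁺`; in particular the jump
across the face (hence the dissipation term of the numerical flux) is of third order. -/
theorem reconstructed_jump_third_order
    (u : ℝ → ℝ) (x : ℝ) (hu : ContDiffAt ℝ 3 u x) :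
    (fun h : ℝ => Rrec u x h - Lrec u x h - (-(h ^ 3 / 6) * deriv (deriv (deriv u)) x))
      =o[𝓝[>] (0 : ℝ)] fun h : ℝ => h ^ 3 := by
  set a1 := deriv u x
  set a2 := deriv (deriv u) x
  set a3 := deriv (deriv (deriv u)) x
  have hP : (fun τ : ℝ => u (x + τ) - (u x + a1 * τ + a2 / 2 * τ ^ 2 + a3 / 6 * τ ^ 3))
      =o[𝓝 (0:ℝ)] fun τ => τ ^ 3 := taylor3_littleO u x hu
  set P : ℝ → ℝ := fun τ => u (x + τ) - (u x + a1 * τ + a2 / 2 * τ ^ 2 + a3 / 6 * τ ^ 3)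
    with hPdef
  have h2 : Tendsto (fun h : ℝ => 2 * h) (𝓝[>] 0) (𝓝 0) := by
    have hcont : Continuous (fun h : ℝ => 2 * h) := continuous_const.mul continuous_id
    have := (hcont.tendsto (0:ℝ)).mono_left
      (nhdsWithin_le_nhds : 𝓝[>] (0:ℝ) ≤ 𝓝 0)
    simpa using this
  have hneg : Tendsto (fun h : ℝ => -h) (𝓝[>] 0) (𝓝 0) := by
    have := (continuous_neg.tendsto (0:ℝ)).mono_left (nhdsWithin_le_nhds (s := Set.Ioi (0:ℝ)))
    simpa using this
  have hA : (fun h : ℝ => P h) =o[𝓝[>] (0:ℝ)] fun h => h ^ 3 := hP.mono nhdsWithin_le_nhds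
  have hB : (fun h : ℝ => P (2 * h)) =o[𝓝[>] (0:ℝ)] fun h => h ^ 3 := by
    have := hP.comp_tendsto h2
    refine this.trans_isBigO ?_
    have e : ((fun τ : ℝ => τ ^ 3) ∘ fun h : ℝ => 2 * h) = fun h : ℝ => 8 * h ^ 3 := by
      funext h; simp only [Function.comp_apply]; ring
    rw [e]
    exact (isBigO_refl (fun h : ℝ => h ^ 3) _).const_mul_left 8
  have hC : (fun h : ℝ => P (-h)) =o[𝓝[>] (0:ℝ)] fun h => h ^ 3 := by
    have := hP.comp_tendsto hneg
    refine this.trans_isBigO ?_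
    have e : ((fun τ : ℝ => τ ^ 3) ∘ fun h : ℝ => -h) = fun h : ℝ => (-1) * h ^ 3 := by
      funext h; simp only [Function.comp_apply]; ring
    rw [e]
    exact (isBigO_refl (fun h : ℝ => h ^ 3) _).const_mul_left (-1)
  have htot := (((hA.const_mul_left 3).sub hB).add hC).const_mul_left (1/6 : ℝ)
  refine htot.congr' (Eventually.of_forall fun h => ?_) EventuallyEq.rfl
  simp only [hPdef, Rrec, Lrec]
  rw [show x - h = x + -h by ring]
  ring
end
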